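/- Under the Dawid–Skene model with a decomposable aggregation rule: for every ε ∈ (0,1), if t̃ ≤ −sqrt(2·ln(1/(1−ε))), then with probability at least 1 − exp(−N·D(ε ‖ 1 − φ(t̃))) the error rate satisfies E_N ≥ ε. -/

import Mathlib

open MeasureTheory ProbabilityTheory Real

noncomputable section

namespace CrowdDS

/-- Conditional law of the label `Z i j` (valued in `Fin (L+1)`, `0` = missing) given the
true label `y j = k`, under the general Dawid–Skene model with assignment probabilities `q`
and confusion matrices `p` (where `p i k h` is the probability of reporting label `h.succ`
given true label `k`). -/
def condLaw {M N L : ℕ} (q : Fin M → Fin N → ℝ) (p : Fin M → Fin L → Fin L → ℝ)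
    (i : Fin M) (j : Fin N) (k : Fin L) (h : Fin (L + 1)) : ℝ :=
  if hz : h = 0 then 1 - q i j else q i j * p i k (h.pred hz)

/-- The normalizing quantity `N̄`. -/
def nbar {M L : ℕ} (f : Fin M → Fin L → Fin (L + 1) → ℝ) : ℝ :=
  Real.sqrt (∑ i, (sSup {x : ℝ | ∃ k l h : Fin L, k ≠ l ∧
    x = |f i k h.succ - f i l h.succ|}) ^ 2)

/-- Expected gap `Δ_j(k,l)` of the aggregated scores. -/
def gap {M N L : ℕ} (f : Fin M → Fin L → Fin (L + 1) → ℝ) (a : Fin L → ℝ)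
    (q : Fin M → Fin N → ℝ) (p : Fin M → Fin L → Fin L → ℝ)
    (j : Fin N) (k l : Fin L) : ℝ :=
  (∑ i, ∑ h : Fin L, q i j * (f i k h.succ - f i l h.succ) * p i k h) + (a k - a l)

/-- `τ_j^min`. -/
def tauMin {M N L : ℕ} (f : Fin M → Fin L → Fin (L + 1) → ℝ) (a : Fin L → ℝ)
    (q : Fin M → Fin N → ℝ) (p : Fin M → Fin L → Fin L → ℝ) (j : Fin N) : ℝ :=
  sInf {x : ℝ | ∃ k l : Fin L, k ≠ l ∧ x = gap f a q p j k l / nbar f}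

/-- `τ_j^max`. -/
def tauMax {M N L : ℕ} (f : Fin M → Fin L → Fin (L + 1) → ℝ) (a : Fin L → ℝ)
    (q : Fin M → Fin N → ℝ) (p : Fin M → Fin L → Fin L → ℝ) (j : Fin N) : ℝ :=
  sSup {x : ℝ | ∃ k l : Fin L, k ≠ l ∧ x = gap f a q p j k l / nbar f}

/-- `t̄ = min_j τ_j^min`. -/
def tbar {M N L : ℕ} (f : Fin M → Fin L → Fin (L + 1) → ℝ) (a : Fin L → ℝ)
    (q : Fin M → Fin N → ℝ) (p : Fin M → Fin L → Fin L → ℝ) : ℝ :=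
  sInf {x : ℝ | ∃ j : Fin N, x = tauMin f a q p j}

/-- `t̃ = max_j τ_j^max`. -/
def ttil {M N L : ℕ} (f : Fin M → Fin L → Fin (L + 1) → ℝ) (a : Fin L → ℝ)
    (q : Fin M → Fin N → ℝ) (p : Fin M → Fin L → Fin L → ℝ) : ℝ :=
  sSup {x : ℝ | ∃ j : Fin N, x = tauMax f a q p j}

/-- The constant `c`. -/
def cConst {M L : ℕ} (f : Fin M → Fin L → Fin (L + 1) → ℝ) : ℝ :=
  (1 / nbar f) * sSup {x : ℝ | ∃ (i : Fin M) (k l h : Fin L), k ≠ l ∧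
    x = |f i k h.succ - f i l h.succ|}

/-- The variance proxy `σ²`. -/
def sigmaSq {M N L : ℕ} (f : Fin M → Fin L → Fin (L + 1) → ℝ)
    (q : Fin M → Fin N → ℝ) (p : Fin M → Fin L → Fin L → ℝ) : ℝ :=
  (1 / (nbar f) ^ 2) * sSup {x : ℝ | ∃ (j : Fin N) (k l : Fin L), k ≠ l ∧
    x = ∑ i, ∑ h : Fin L, q i j * (f i k h.succ - f i l h.succ) ^ 2 * p i k h}

/-- The error rate `E_N`. -/
def errRate {Ω : Type*} {N L : ℕ} (y yhat : Fin N → Ω → Fin L) (ω : Ω) : ℝ :=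
  (N : ℝ)⁻¹ * ∑ j, if yhat j ω ≠ y j ω then (1 : ℝ) else 0

/-- `φ(x) = exp(−x²/2)`. -/
def phi (x : ℝ) : ℝ := Real.exp (-x ^ 2 / 2)

/-- Kullback–Leibler divergence between Bernoulli distributions. -/
def klBer (x y : ℝ) : ℝ := x * Real.log (x / y) + (1 - x) * Real.log ((1 - x) / (1 - y))

end CrowdDS

/-!
Call item `j` misranked when some label strictly outscores its true label: every argmax rule
errs on it. Given `y j = k` and `l ≠ k`, the score difference `s_j(k) - s_j(l)` is a sum of `M`
conditionally independent terms, the `i`-th bounded by the spread of `f i`, with mean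
`Δ_j(k,l) ≤ t̃ N̄ < 0`; Hoeffding's inequality bounds the probability that it is still nonnegative
by `φ(t̃)`. So each item is misranked with probability at least `ρ = 1 - φ(t̃) ≥ ε`, independently
across items, and the Chernoff bound for the lower tail of a sum of independent Bernoulli
variables gives `P(#misranked ≤ εN) ≤ exp(-N D(ε‖ρ))`.
-/

theorem measureReal_pi_sum_add_nonneg_le {ι : Type*} [Fintype ι] {α : ι → Type*}
    [∀ i, MeasurableSpace (α i)] (ν : ∀ i, Measure (α i)) [∀ i, IsProbabilityMeasure (ν i)]
    {g : ∀ i, α i → ℝ} (hg : ∀ i, Measurable (g i)) {C : ι → ℝ} (hgC : ∀ i x, |g i x| ≤ C i)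
    {A : ℝ} (hA : ∑ i, ∫ x, g i x ∂ν i + A ≤ 0) :
    (Measure.pi ν).real {z | 0 ≤ ∑ i, g i (z i) + A}
      ≤ exp (-(∑ i, ∫ x, g i x ∂ν i + A) ^ 2 / (2 * ∑ i, C i ^ 2)) := by
  have hmean i : (Measure.pi ν)[fun z => g i (z i)] = ∫ x, g i x ∂ν i := by
    rw [← (measurePreserving_eval ν i).map_eq,
      integral_map (measurable_pi_apply i).aemeasurable (hg i).aestronglyMeasurable]
  have hsubG i : HasSubgaussianMGF (fun z => g i (z i) - ∫ x, g i x ∂ν i)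
      ((‖C i - -C i‖₊ / 2) ^ 2) (Measure.pi ν) := by
    rw [← hmean]
    exact hasSubgaussianMGF_of_mem_Icc ((hg i).comp (measurable_pi_apply i)).aemeasurable
      (ae_of_all _ fun z => abs_le.mp (hgC i (z i)))
  have hind : iIndepFun (fun i z => g i (z i) - ∫ x, g i x ∂ν i) (Measure.pi ν) :=
    iIndepFun_pi fun i => ((hg i).sub_const _).aemeasurable
  have hC i : ((((‖C i - -C i‖₊ / 2) ^ 2 : NNReal)) : ℝ) = C i ^ 2 := by
    simp [sub_neg_eq_add, ← two_mul]
  have hset : {z : ∀ i, α i | 0 ≤ ∑ i, g i (z i) + A}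
      = {z | -(∑ i, ∫ x, g i x ∂ν i + A) ≤ ∑ i, (g i (z i) - ∫ x, g i x ∂ν i)} := by
    ext z
    simp only [Set.mem_ofPred_eq, Finset.sum_sub_distrib]
    constructor <;> intro h <;> linarith
  have := HasSubgaussianMGF.measure_sum_ge_le_of_iIndepFun hind (s := Finset.univ)
    (fun i _ => hsubG i) (neg_nonneg.mpr hA)
  rw [← hset, neg_sq, NNReal.coe_sum] at this
  simpa only [hC] using this

theorem sum_filter_prod_le_exp_of_mean_nonpos {ι α : Type*} [Fintype ι] [DecidableEq ι]
    [Fintype α] (w : ι → α → ℝ) (hw0 : ∀ i x, 0 ≤ w i x) (hw1 : ∀ i, ∑ x, w i x = 1)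
    (g : ι → α → ℝ) (C : ι → ℝ) (hgC : ∀ i x, |g i x| ≤ C i) {A : ℝ}
    (hA : ∑ i, ∑ x, w i x * g i x + A ≤ 0) :
    ∑ z : ι → α with 0 ≤ ∑ i, g i (z i) + A, ∏ i, w i (z i)
      ≤ exp (-(∑ i, ∑ x, w i x * g i x + A) ^ 2 / (2 * ∑ i, C i ^ 2)) := by
  let _ : MeasurableSpace α := ⊤
  let P i : PMF α := PMF.ofFintype (fun x => ENNReal.ofReal (w i x)) (by
    rw [← ENNReal.ofReal_sum_of_nonneg fun x _ => hw0 i x, hw1, ENNReal.ofReal_one])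
  have hP i x : (P i).toMeasure.real {x} = w i x := by
    rw [measureReal_def, PMF.toMeasure_apply_singleton _ _ (measurableSet_singleton x)]
    exact ENNReal.toReal_ofReal (hw0 i x)
  have hmean i : ∫ x, g i x ∂(P i).toMeasure = ∑ x, w i x * g i x := by
    rw [integral_fintype .of_finite]
    simp [hP]
  have hsum (S : Finset (ι → α)) :
      (Measure.pi fun i => (P i).toMeasure).real S = ∑ z ∈ S, ∏ i, w i (z i) := by
    rw [← sum_measureReal_singleton]
    refine Finset.sum_congr rfl fun z _ => ?_
    simp only [measureReal_def, Measure.pi_singleton, ENNReal.toReal_prod]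
    exact Finset.prod_congr rfl fun i _ => hP i (z i)
  have := measureReal_pi_sum_add_nonneg_le (fun i => (P i).toMeasure)
    (fun i => Measurable.of_discrete) hgC (by simpa only [hmean] using hA)
  simp only [hmean] at this
  rw [← hsum, Finset.coe_filter]
  simpa only [Finset.mem_univ, true_and] using this

theorem mgf_indicator_one {Ω : Type*} [MeasurableSpace Ω] {μ : Measure Ω}
    [IsProbabilityMeasure μ] {B : Set Ω} (hB : MeasurableSet B) (t : ℝ) :
    mgf (B.indicator 1) μ t = 1 + (exp t - 1) * μ.real B := by
  have h : (fun ω => exp (t * B.indicator 1 ω))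
      = fun ω => B.indicator (fun _ => exp t - 1) ω + 1 := by
    funext ω
    by_cases hω : ω ∈ B <;> simp [hω]
  rw [mgf, h, integral_add ((integrable_const _).indicator hB) (integrable_const 1),
    integral_indicator_const _ hB]
  simp only [integral_const, probReal_univ, smul_eq_mul]
  ring

theorem mgf_sum_indicator_le {Ω ι : Type*} [MeasurableSpace Ω] {μ : Measure Ω}
    [IsProbabilityMeasure μ] [Fintype ι] {B : ι → Set Ω} (hBm : ∀ j, MeasurableSet (B j))
    (hB : iIndepFun (fun j => (B j).indicator (1 : Ω → ℝ)) μ) {ρ t : ℝ}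
    (hρB : ∀ j, ρ ≤ μ.real (B j)) (ht : t ≤ 0) :
    mgf (∑ j, (B j).indicator (1 : Ω → ℝ)) μ t ≤ (1 + (exp t - 1) * ρ) ^ Fintype.card ι := by
  rw [hB.mgf_sum fun j => measurable_one.indicator (hBm j)]
  rw [← Finset.card_univ, ← Finset.prod_const]
  refine Finset.prod_le_prod (fun j _ => mgf_nonneg) fun j _ => ?_
  rw [mgf_indicator_one (hBm j)]
  have : exp t ≤ 1 := exp_le_one_iff.2 ht
  nlinarith [hρB j]

namespace CrowdDS

theorem klBer_eq_mul_log_sub_log {ε ρ : ℝ} (hε0 : 0 < ε) (hε1 : ε < 1) (hρ0 : 0 < ρ)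
    (hρ1 : ρ < 1) :
    klBer ε ρ = ε * log (ε * (1 - ρ) / (ρ * (1 - ε))) - log ((1 - ρ) / (1 - ε)) := by
  have h1 : 1 - ε ≠ 0 := by linarith
  have h2 : 1 - ρ ≠ 0 := by linarith
  rw [klBer, log_div (mul_ne_zero hε0.ne' h2) (mul_ne_zero hρ0.ne' h1),
    log_mul hε0.ne' h2, log_mul hρ0.ne' h1, log_div hε0.ne' hρ0.ne', log_div h1 h2, log_div h2 h1]
  ring

theorem measureReal_sum_indicator_le_le_exp_klBer {Ω ι : Type*} [MeasurableSpace Ω]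
    {μ : Measure Ω} [IsProbabilityMeasure μ] [Fintype ι] {B : ι → Set Ω}
    (hBm : ∀ j, MeasurableSet (B j)) (hB : iIndepFun (fun j => (B j).indicator (1 : Ω → ℝ)) μ)
    {ε ρ : ℝ} (hε : 0 < ε) (hερ : ε ≤ ρ) (hρ : ρ < 1) (hρB : ∀ j, ρ ≤ μ.real (B j)) :
    μ.real {ω | ∑ j, (B j).indicator 1 ω ≤ ε * Fintype.card ι}
      ≤ exp (-(Fintype.card ι) * klBer ε ρ) := by
  set n : ℕ := Fintype.card ι
  have hρ0 : 0 < ρ := hε.trans_le hερ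
  have hε1 : ε < 1 := hερ.trans_lt hρ
  -- `log η` is the tilt minimising the Chernoff bound
  set η := ε * (1 - ρ) / (ρ * (1 - ε)) with hη
  have hη0 : 0 < η := div_pos (mul_pos hε (by linarith)) (mul_pos hρ0 (by linarith))
  have hη1 : η ≤ 1 := by
    rw [div_le_one (mul_pos hρ0 (by linarith))]
    nlinarith
  have hρη : 1 + (exp (log η) - 1) * ρ = (1 - ρ) / (1 - ε) := by
    rw [exp_log hη0, hη]
    field_simp [show 1 - ε ≠ 0 by linarith]
    ring
  set S := ∑ j, (B j).indicator (1 : Ω → ℝ)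
  have hSm : Measurable S := by
    simpa only [S, Finset.sum_fn] using
      Finset.measurable_sum _ fun j _ => measurable_one.indicator (hBm j)
  have hS ω : S ω ∈ Set.Icc 0 (n : ℝ) := by
    have h01 j : (B j).indicator (1 : Ω → ℝ) ω ∈ Set.Icc 0 1 := by
      by_cases hω : ω ∈ B j <;> simp [hω]
    simp only [S, Finset.sum_apply]
    exact ⟨Finset.sum_nonneg fun j _ => (h01 j).1,
      (Finset.sum_le_sum fun j _ => (h01 j).2).trans_eq (by simp [n])⟩
  have hr : 0 < (1 - ρ) / (1 - ε) := div_pos (by linarith) (by linarith)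
  calc μ.real {ω | ∑ j, (B j).indicator 1 ω ≤ ε * n}
      = μ.real {ω | S ω ≤ ε * n} := by simp only [S, Finset.sum_apply]
    _ ≤ exp (-log η * (ε * n)) * mgf S μ (log η) :=
        measure_le_le_exp_mul_mgf (ε * n) (log_nonpos hη0.le hη1)
          (integrable_exp_mul_of_mem_Icc hSm.aemeasurable (ae_of_all _ hS))
    _ ≤ exp (-log η * (ε * n)) * ((1 - ρ) / (1 - ε)) ^ n := by
        rw [← hρη]
        gcongr
        exact mgf_sum_indicator_le hBm hB hρB (log_nonpos hη0.le hη1)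
    _ = exp (-n * klBer ε ρ) := by
        rw [← exp_log hr, ← exp_nat_mul, ← exp_add, klBer_eq_mul_log_sub_log hε hε1 hρ0 hρ, ← hη]
        congr 1
        ring

variable {M N L : ℕ}

def score (f : Fin M → Fin L → Fin (L + 1) → ℝ) (a : Fin L → ℝ) (z : Fin M → Fin (L + 1))
    (k : Fin L) : ℝ :=
  ∑ i, f i k (z i) + a k

def misranked (f : Fin M → Fin L → Fin (L + 1) → ℝ) (a : Fin L → ℝ) :
    Set (Fin L × (Fin M → Fin (L + 1))) :=
  {c | ∃ k, score f a c.2 c.1 < score f a c.2 k}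

def scoreSpread (f : Fin M → Fin L → Fin (L + 1) → ℝ) (i : Fin M) : ℝ :=
  sSup {x : ℝ | ∃ k l h : Fin L, k ≠ l ∧ x = |f i k h.succ - f i l h.succ|}

theorem nbar_sq (f : Fin M → Fin L → Fin (L + 1) → ℝ) :
    nbar f ^ 2 = ∑ i, scoreSpread f i ^ 2 :=
  sq_sqrt (Finset.sum_nonneg fun _ _ => sq_nonneg _)

theorem abs_sub_le_scoreSpread {f : Fin M → Fin L → Fin (L + 1) → ℝ}
    (hf0 : ∀ i k k', f i k 0 = f i k' 0) {i : Fin M} {k l : Fin L} (hkl : k ≠ l)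
    (x : Fin (L + 1)) : |f i k x - f i l x| ≤ scoreSpread f i := by
  have hbdd : BddAbove {x : ℝ | ∃ k l h : Fin L, k ≠ l ∧ x = |f i k h.succ - f i l h.succ|} :=
    ((Set.finite_range fun c : Fin L × Fin L × Fin L =>
      |f i c.1 c.2.2.succ - f i c.2.1 c.2.2.succ|).subset
        (by rintro _ ⟨k, l, h, -, rfl⟩; exact ⟨(k, l, h), rfl⟩)).bddAbove
  cases x using Fin.cases with
  | zero =>
    rw [hf0 i k l, sub_self, abs_zero]
    exact Real.sSup_nonneg fun _ ⟨_, _, _, _, hx⟩ => hx ▸ abs_nonneg _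
  | succ h => exact le_csSup hbdd ⟨k, l, h, hkl, rfl⟩

theorem condLaw_nonneg {q : Fin M → Fin N → ℝ} {p : Fin M → Fin L → Fin L → ℝ}
    (hq0 : ∀ i j, 0 ≤ q i j) (hq1 : ∀ i j, q i j ≤ 1) (hp0 : ∀ i k h, 0 ≤ p i k h)
    (i : Fin M) (j : Fin N) (k : Fin L) (x : Fin (L + 1)) : 0 ≤ condLaw q p i j k x := by
  unfold condLaw
  split
  · linarith [hq1 i j]
  · exact mul_nonneg (hq0 i j) (hp0 i k _)

theorem sum_condLaw_mul (q : Fin M → Fin N → ℝ) (p : Fin M → Fin L → Fin L → ℝ)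
    (i : Fin M) (j : Fin N) (k : Fin L) (g : Fin (L + 1) → ℝ) :
    ∑ x, condLaw q p i j k x * g x = (1 - q i j) * g 0 + ∑ h, q i j * p i k h * g h.succ := by
  simp [Fin.sum_univ_succ, condLaw, Fin.succ_ne_zero]

theorem sum_condLaw {q : Fin M → Fin N → ℝ} {p : Fin M → Fin L → Fin L → ℝ}
    (hp1 : ∀ i k, ∑ h, p i k h = 1) (i : Fin M) (j : Fin N) (k : Fin L) :
    ∑ x, condLaw q p i j k x = 1 := by
  simpa [mul_assoc, ← Finset.mul_sum, hp1] using sum_condLaw_mul q p i j k 1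

theorem gap_eq_sum_condLaw {f : Fin M → Fin L → Fin (L + 1) → ℝ}
    (hf0 : ∀ i k k', f i k 0 = f i k' 0) (a : Fin L → ℝ) (q : Fin M → Fin N → ℝ)
    (p : Fin M → Fin L → Fin L → ℝ) (j : Fin N) (k l : Fin L) :
    gap f a q p j k l = ∑ i, ∑ x, condLaw q p i j k x * (f i k x - f i l x) + (a k - a l) := by
  simp only [gap, sum_condLaw_mul, hf0 _ k l, sub_self, mul_zero, zero_add]
  congr! 3
  ring

theorem phi_le_one_sub {ε t : ℝ} (hε1 : ε < 1) (ht : t ≤ -√(2 * log (1 / (1 - ε)))) :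
    phi t ≤ 1 - ε := by
  have hsq : 2 * log (1 / (1 - ε)) ≤ t ^ 2 := by
    simpa using (sqrt_le_iff.1 (le_neg.1 ht)).2
  calc phi t ≤ exp (-log (1 / (1 - ε))) := by rw [phi, exp_le_exp]; linarith
    _ = 1 - ε := by rw [exp_neg, exp_log (by simpa using hε1), one_div, inv_inv]

theorem ne_of_mem_misranked {f : Fin M → Fin L → Fin (L + 1) → ℝ} {a : Fin L → ℝ}
    {z : Fin M → Fin (L + 1)} {k k' : Fin L} (h : (k, z) ∈ misranked f a)
    (hk' : ∀ l, score f a z l ≤ score f a z k') : k' ≠ k := by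
  rintro rfl
  obtain ⟨l, hl⟩ := h
  exact (hk' l).not_gt hl

theorem le_errRate_of_lt {Ω : Type*} {N L : ℕ} {y yhat : Fin N → Ω → Fin L} {ω : Ω} {ε : ℝ}
    (h : ε * N < ∑ j, if yhat j ω ≠ y j ω then (1 : ℝ) else 0) : ε ≤ errRate y yhat ω := by
  rcases N.eq_zero_or_pos with rfl | hN
  · simp at h
  rw [errRate, ← div_eq_inv_mul, le_div_iff₀ (by positivity)]
  exact h.le

section Normalized

variable {f : Fin M → Fin L → Fin (L + 1) → ℝ} {a : Fin L → ℝ} {q : Fin M → Fin N → ℝ}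
  {p : Fin M → Fin L → Fin L → ℝ}

theorem ttil_eq_zero_of_forall (h : ∀ j k l, k ≠ l → gap f a q p j k l / nbar f = 0) :
    ttil f a q p = 0 := by
  have hsSup {S : Set ℝ} (hS : ∀ x ∈ S, x = 0) : sSup S = 0 :=
    le_antisymm (Real.sSup_nonpos fun x hx => (hS x hx).le)
      (Real.sSup_nonneg fun x hx => (hS x hx).ge)
  refine hsSup fun _ ⟨j, hj⟩ => hj ▸ hsSup ?_
  rintro _ ⟨k, l, hkl, rfl⟩
  exact h j k l hkl

theorem nbar_pos_of_ttil_neg (ht : ttil f a q p < 0) : 0 < nbar f := by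
  refine (sqrt_nonneg _).lt_of_ne fun (h : 0 = nbar f) => ht.ne (ttil_eq_zero_of_forall ?_)
  intro j k l _
  rw [← h, div_zero]

theorem nontrivial_of_ttil_neg (ht : ttil f a q p < 0) : Nontrivial (Fin L) := by
  by_contra h
  rw [not_nontrivial_iff_subsingleton] at h
  exact ht.ne (ttil_eq_zero_of_forall fun j k l hkl => absurd (Subsingleton.elim k l) hkl)

theorem gap_le_ttil_mul_nbar (hnb : 0 < nbar f) (j : Fin N) {k l : Fin L} (hkl : k ≠ l) :
    gap f a q p j k l ≤ ttil f a q p * nbar f := by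
  rw [← div_le_iff₀ hnb]
  calc gap f a q p j k l / nbar f ≤ tauMax f a q p j := by
        refine le_csSup ((Set.finite_range fun c : Fin L × Fin L =>
          gap f a q p j c.1 c.2 / nbar f).subset ?_).bddAbove ⟨k, l, hkl, rfl⟩
        rintro _ ⟨k, l, -, rfl⟩
        exact ⟨(k, l), rfl⟩
    _ ≤ ttil f a q p :=
        le_csSup ((Set.finite_range (tauMax f a q p)).subset
          (by rintro _ ⟨j, rfl⟩; exact ⟨j, rfl⟩)).bddAbove ⟨j, rfl⟩

end Normalized

section Model

variable {Ω : Type*} [MeasurableSpace Ω]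

def itemObs (y : Fin N → Ω → Fin L) (Z : Fin M → Fin N → Ω → Fin (L + 1)) (j : Fin N) (ω : Ω) :
    Fin L × (Fin M → Fin (L + 1)) :=
  (y j ω, fun i => Z i j ω)

variable {μ : Measure Ω}
  {y : Fin N → Ω → Fin L} {Z : Fin M → Fin N → Ω → Fin (L + 1)}
  {pri : Fin L → ℝ} {q : Fin M → Fin N → ℝ} {p : Fin M → Fin L → Fin L → ℝ}
  {f : Fin M → Fin L → Fin (L + 1) → ℝ} {a : Fin L → ℝ}

theorem measurable_itemObs (hym : ∀ j, Measurable (y j)) (hZm : ∀ i j, Measurable (Z i j))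
    (j : Fin N) : Measurable (itemObs y Z j) :=
  (hym j).prodMk (measurable_pi_lambda _ fun i => hZm i j)

theorem measureReal_label_and_mem [IsFiniteMeasure μ] (hym : ∀ j, Measurable (y j))
    (hZm : ∀ i j, Measurable (Z i j))
    (hlaw : ∀ (j : Fin N) (k : Fin L) (h : Fin M → Fin (L + 1)),
      (μ {ω | y j ω = k ∧ ∀ i, Z i j ω = h i}).toReal = pri k * ∏ i, condLaw q p i j k (h i))
    (j : Fin N) (k : Fin L) (S : Finset (Fin M → Fin (L + 1))) :
    μ.real {ω | y j ω = k ∧ (fun i => Z i j ω) ∈ S}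
      = pri k * ∑ z ∈ S, ∏ i, condLaw q p i j k (z i) := by
  have hY : MeasurableSet {ω | y j ω = k} := hym j (measurableSet_singleton k)
  have hZ : Measurable fun ω i => Z i j ω := measurable_pi_lambda _ fun i => hZm i j
  calc μ.real {ω | y j ω = k ∧ (fun i => Z i j ω) ∈ S}
      = (μ.restrict {ω | y j ω = k}).real ((fun ω i => Z i j ω) ⁻¹' S) := by
        rw [measureReal_restrict_apply (hZ S.measurableSet), Set.inter_comm]
        rfl
    _ = ∑ z ∈ S, (μ.restrict {ω | y j ω = k}).real ((fun ω i => Z i j ω) ⁻¹' {z}) :=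
        (sum_measureReal_preimage_singleton S fun z _ => hZ (measurableSet_singleton z)).symm
    _ = pri k * ∑ z ∈ S, ∏ i, condLaw q p i j k (z i) := by
        rw [Finset.mul_sum]
        refine Finset.sum_congr rfl fun z _ => ?_
        rw [measureReal_restrict_apply (hZ (measurableSet_singleton z)), ← hlaw, measureReal_def]
        congr 2
        ext ω
        simp [funext_iff, and_comm]

theorem measureReal_label_and_score_le_le [IsFiniteMeasure μ] (hym : ∀ j, Measurable (y j))
    (hZm : ∀ i j, Measurable (Z i j)) (hpri : ∀ k, 0 ≤ pri k)
    (hq0 : ∀ i j, 0 ≤ q i j) (hq1 : ∀ i j, q i j ≤ 1)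
    (hp0 : ∀ i k h, 0 ≤ p i k h) (hp1 : ∀ i k, ∑ h, p i k h = 1)
    (hlaw : ∀ (j : Fin N) (k : Fin L) (h : Fin M → Fin (L + 1)),
      (μ {ω | y j ω = k ∧ ∀ i, Z i j ω = h i}).toReal = pri k * ∏ i, condLaw q p i j k (h i))
    (hf0 : ∀ i k k', f i k 0 = f i k' 0) (ht : ttil f a q p < 0)
    (j : Fin N) {k l : Fin L} (hkl : k ≠ l) :
    μ.real {ω | y j ω = k ∧ score f a (fun i => Z i j ω) l ≤ score f a (fun i => Z i j ω) k}
      ≤ pri k * phi (ttil f a q p) := by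
  have hnb := nbar_pos_of_ttil_neg ht
  have htnb := mul_neg_of_neg_of_pos ht hnb
  have hgap := gap_le_ttil_mul_nbar hnb j hkl (a := a) (q := q) (p := p)
  have hset : {ω | y j ω = k ∧ score f a (fun i => Z i j ω) l ≤ score f a (fun i => Z i j ω) k}
      = {ω | y j ω = k ∧ (fun i => Z i j ω) ∈ Finset.univ.filter fun z : Fin M → Fin (L + 1) =>
          0 ≤ ∑ i, (f i k (z i) - f i l (z i)) + (a k - a l)} := by
    ext ω
    simp only [score, Finset.sum_sub_distrib, Finset.mem_filter,
      Finset.mem_univ, true_and, Set.mem_ofPred_eq, sub_add_sub_comm, sub_nonneg]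
  rw [hset, measureReal_label_and_mem hym hZm hlaw]
  gcongr
  · exact hpri k
  have hA := gap_eq_sum_condLaw hf0 a q p j k l
  calc _ ≤ exp (-gap f a q p j k l ^ 2 / (2 * ∑ i, scoreSpread f i ^ 2)) := by
        rw [hA]
        refine sum_filter_prod_le_exp_of_mean_nonpos (fun i x => condLaw q p i j k x)
          (condLaw_nonneg hq0 hq1 hp0 · j k) (sum_condLaw hp1 · j k)
          (fun i x => f i k x - f i l x) (scoreSpread f)
          (fun i x => abs_sub_le_scoreSpread hf0 hkl x) ?_
        rw [← hA]
        exact hgap.trans htnb.le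
    _ ≤ phi (ttil f a q p) := by
        have hsq : ttil f a q p ^ 2 ≤ gap f a q p j k l ^ 2 / nbar f ^ 2 := by
          rw [le_div_iff₀ (by positivity)]
          nlinarith
        rw [← nbar_sq, phi, exp_le_exp,
          show -gap f a q p j k l ^ 2 / (2 * nbar f ^ 2)
            = -(gap f a q p j k l ^ 2 / nbar f ^ 2) / 2 by ring]
        linarith

theorem one_sub_phi_ttil_le_measureReal_misranked [IsProbabilityMeasure μ]
    (hym : ∀ j, Measurable (y j)) (hZm : ∀ i j, Measurable (Z i j)) (hpri : ∀ k, 0 ≤ pri k)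
    (hq0 : ∀ i j, 0 ≤ q i j) (hq1 : ∀ i j, q i j ≤ 1)
    (hp0 : ∀ i k h, 0 ≤ p i k h) (hp1 : ∀ i k, ∑ h, p i k h = 1)
    (hprior : ∀ (j : Fin N) (k : Fin L), (μ {ω | y j ω = k}).toReal = pri k)
    (hlaw : ∀ (j : Fin N) (k : Fin L) (h : Fin M → Fin (L + 1)),
      (μ {ω | y j ω = k ∧ ∀ i, Z i j ω = h i}).toReal = pri k * ∏ i, condLaw q p i j k (h i))
    (hf0 : ∀ i k k', f i k 0 = f i k' 0) (ht : ttil f a q p < 0) (j : Fin N) :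
    1 - phi (ttil f a q p) ≤ μ.real (itemObs y Z j ⁻¹' misranked f a) := by
  have := nontrivial_of_ttil_neg ht
  choose other hother using fun k : Fin L => exists_ne k
  have hpri1 : ∑ k, pri k = 1 := by
    simp_rw [← hprior j, ← measureReal_def]
    change ∑ k, μ.real (y j ⁻¹' {k}) = 1
    rw [sum_measureReal_preimage_singleton _ fun k _ => hym j (measurableSet_singleton k)]
    simp
  have hmeas : MeasurableSet (itemObs y Z j ⁻¹' misranked f a) :=
    measurable_itemObs hym hZm j .of_discrete
  have hcompl : (itemObs y Z j ⁻¹' misranked f a)ᶜ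
      ⊆ ⋃ k, {ω | y j ω = k ∧
          score f a (fun i => Z i j ω) (other k) ≤ score f a (fun i => Z i j ω) k} := by
    intro ω hω
    simp only [Set.mem_compl_iff, Set.mem_preimage, itemObs, misranked, Set.mem_ofPred_eq,
      not_exists, not_lt] at hω
    exact Set.mem_iUnion.2 ⟨y j ω, rfl, hω _⟩
  have hle : μ.real (itemObs y Z j ⁻¹' misranked f a)ᶜ
      ≤ phi (ttil f a q p) :=
    calc _ ≤ ∑ k, μ.real {ω | y j ω = k ∧
          score f a (fun i => Z i j ω) (other k) ≤ score f a (fun i => Z i j ω) k} :=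
          (measureReal_mono hcompl).trans (measureReal_iUnion_fintype_le _)
      _ ≤ ∑ k, pri k * phi (ttil f a q p) := Finset.sum_le_sum fun k _ =>
          measureReal_label_and_score_le_le hym hZm hpri hq0 hq1 hp0 hp1 hlaw hf0 ht j
            (hother k).symm
      _ = phi (ttil f a q p) := by rw [← Finset.sum_mul, hpri1, one_mul]
  rw [probReal_compl_eq_one_sub hmeas] at hle
  linarith

end Model

end CrowdDS

theorem error_rate_lower_bound_high_prob_general
    {Ω : Type*} [MeasurableSpace Ω] (μ : Measure Ω) [IsProbabilityMeasure μ]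
    {M N L : ℕ}
    (y : Fin N → Ω → Fin L) (Z : Fin M → Fin N → Ω → Fin (L + 1))
    (hym : ∀ j, Measurable (y j)) (hZm : ∀ i j, Measurable (Z i j))
    (pri : Fin L → ℝ) (q : Fin M → Fin N → ℝ) (p : Fin M → Fin L → Fin L → ℝ)
    (hpri : ∀ k, 0 ≤ pri k) (hq0 : ∀ i j, 0 ≤ q i j) (hq1 : ∀ i j, q i j ≤ 1)
    (hp0 : ∀ i k h, 0 ≤ p i k h) (hp1 : ∀ i k, ∑ h, p i k h = 1)
    (hprior : ∀ (j : Fin N) (k : Fin L), (μ {ω | y j ω = k}).toReal = pri k)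
    (hlaw : ∀ (j : Fin N) (k : Fin L) (h : Fin M → Fin (L + 1)),
      (μ {ω | y j ω = k ∧ ∀ i, Z i j ω = h i}).toReal
        = pri k * ∏ i, CrowdDS.condLaw q p i j k (h i))
    (hindep : iIndepFun (fun j ω => (y j ω, fun i => Z i j ω)) μ)
    (f : Fin M → Fin L → Fin (L + 1) → ℝ) (hf0 : ∀ i k k', f i k 0 = f i k' 0)
    (a : Fin L → ℝ)
    (yhat : Fin N → Ω → Fin L)
    (hyhat : ∀ (j : Fin N) (ω : Ω) (k : Fin L),
      (∑ i, f i k (Z i j ω)) + a k ≤ (∑ i, f i (yhat j ω) (Z i j ω)) + a (yhat j ω))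
    {ε : ℝ} (hε0 : 0 < ε) (hε1 : ε < 1)
    (ht : CrowdDS.ttil f a q p ≤ -Real.sqrt (2 * Real.log (1 / (1 - ε)))) :
    1 - Real.exp (-(N : ℝ) *
        CrowdDS.klBer ε (1 - CrowdDS.phi (CrowdDS.ttil f a q p)))
      ≤ (μ {ω | ε ≤ CrowdDS.errRate y yhat ω}).toReal := by
  open CrowdDS in
  set B := fun j => itemObs y Z j ⁻¹' misranked f a
  set S := fun ω => ∑ j, (B j).indicator (1 : Ω → ℝ) ω
  have hlog : 0 < log (1 / (1 - ε)) := log_pos (by rw [lt_div_iff₀ (by linarith)]; linarith)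
  have ht0 : ttil f a q p < 0 := ht.trans_lt (neg_neg_of_pos (sqrt_pos.2 (by positivity)))
  have hBm j : MeasurableSet (B j) := measurable_itemObs hym hZm j .of_discrete
  have hSm : Measurable S := Finset.measurable_sum _ fun j _ => measurable_one.indicator (hBm j)
  have hρε : ε ≤ 1 - phi (ttil f a q p) := by linarith [phi_le_one_sub hε1 ht]
  have hchernoff : μ.real {ω | S ω ≤ ε * N} ≤ exp (-N * klBer ε (1 - phi (ttil f a q p))) := by
    simpa using measureReal_sum_indicator_le_le_exp_klBer hBm
      (hindep.comp (fun _ => (misranked f a).indicator 1) fun _ => .of_discrete)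
      hε0 hρε (sub_lt_self 1 (exp_pos _))
      (one_sub_phi_ttil_le_measureReal_misranked hym hZm hpri hq0 hq1 hp0 hp1 hprior hlaw hf0
        ht0)
  have herr : {ω | S ω ≤ ε * N}ᶜ ⊆ {ω | ε ≤ errRate y yhat ω} := by
    intro ω (hω : ¬S ω ≤ ε * N)
    refine le_errRate_of_lt ((not_le.1 hω).trans_le (Finset.sum_le_sum fun j _ => ?_))
    by_cases hB : ω ∈ B j
    · simp [hB, ne_of_mem_misranked hB (hyhat j ω)]
    · simp only [Set.indicator_of_notMem hB]
      split_ifs <;> norm_num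
  calc 1 - exp (-N * klBer ε (1 - phi (ttil f a q p))) ≤ 1 - μ.real {ω | S ω ≤ ε * N} := by
        linarith
    _ = μ.real {ω | S ω ≤ ε * N}ᶜ :=
        (probReal_compl_eq_one_sub (measurableSet_le hSm measurable_const)).symm
    _ ≤ μ.real {ω | ε ≤ errRate y yhat ω} := measureReal_mono herr

/-- Under the general Dawid–Skene model with a decomposable aggregation
rule: for every `ε ∈ (0,1)`, if `t̃ ≤ −sqrt(2 ln(1/(1−ε)))`, then with probability at least
`1 − exp(−N · D(ε ‖ 1 − φ(t̃)))` the error rate satisfies `E_N ≥ ε`. -/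
theorem error_rate_lower_bound_high_prob
    {Ω : Type*} [MeasurableSpace Ω] (μ : Measure Ω) [IsProbabilityMeasure μ]
    {M N L : ℕ} (hM : 0 < M) (hN : 0 < N) (hL : 2 ≤ L)
    (y : Fin N → Ω → Fin L) (Z : Fin M → Fin N → Ω → Fin (L + 1))
    (hym : ∀ j, Measurable (y j)) (hZm : ∀ i j, Measurable (Z i j))
    (pri : Fin L → ℝ) (q : Fin M → Fin N → ℝ) (p : Fin M → Fin L → Fin L → ℝ)
    (hpri : ∀ k, 0 ≤ pri k) (hq0 : ∀ i j, 0 ≤ q i j) (hq1 : ∀ i j, q i j ≤ 1)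
    (hp0 : ∀ i k h, 0 ≤ p i k h) (hp1 : ∀ i k, ∑ h, p i k h = 1)
    (hprior : ∀ (j : Fin N) (k : Fin L), (μ {ω | y j ω = k}).toReal = pri k)
    (hlaw : ∀ (j : Fin N) (k : Fin L) (h : Fin M → Fin (L + 1)),
      (μ {ω | y j ω = k ∧ ∀ i, Z i j ω = h i}).toReal
        = pri k * ∏ i, CrowdDS.condLaw q p i j k (h i))
    (hindep : iIndepFun (fun j ω => (y j ω, fun i => Z i j ω)) μ)
    (f : Fin M → Fin L → Fin (L + 1) → ℝ) (hf0 : ∀ i k k', f i k 0 = f i k' 0)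
    (a : Fin L → ℝ)
    (yhat : Fin N → Ω → Fin L) (hyhatm : ∀ j, Measurable (yhat j))
    (hyhat : ∀ (j : Fin N) (ω : Ω) (k : Fin L),
      (∑ i, f i k (Z i j ω)) + a k ≤ (∑ i, f i (yhat j ω) (Z i j ω)) + a (yhat j ω))
    {ε : ℝ} (hε0 : 0 < ε) (hε1 : ε < 1)
    (ht : CrowdDS.ttil f a q p ≤ -Real.sqrt (2 * Real.log (1 / (1 - ε)))) :
    1 - Real.exp (-(N : ℝ) *
        CrowdDS.klBer ε (1 - CrowdDS.phi (CrowdDS.ttil f a q p)))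
      ≤ (μ {ω | ε ≤ CrowdDS.errRate y yhat ω}).toReal :=
  error_rate_lower_bound_high_prob_general μ y Z hym hZm pri q p hpri hq0 hq1 hp0 hp1 hprior hlaw
    hindep f hf0 a yhat hyhat hε0 hε1 ht
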